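/- Let G be a finitely generated group with a (K,C)-quasi-action A on a simplicial tree T, and fix x ∈ T. Then there exists R₀ such that for every R ≥ R₀ the set S = {s ∈ G : d(A(s,x), x) ≤ R} satisfies: (i) S generates G; and (ii) there exist K' ≥ 1 and C' ≥ 0 such that for all g, h ∈ G, (1/K')·d_S(g,h) − C' ≤ d(A(g,x), A(h,x)) ≤ K'·d_S(g,h) + C', i.e. the orbit map g ↦ A(g,x) is a quasi-isometric embedding of G with the word metric d_S into T. -/

import Mathlib

/-!
For any generating set whose elements move `x` a bounded amount, the orbit map `g ↦ A(g,x)` is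
coarsely Lipschitz, which is the upper bound. For the lower bound, write `g⁻¹h` as a word in a fixed
finite generating set `S₀`: the orbit points along this word form a chain with uniformly bounded
steps from `A(g,x)` to `A(h,x)`, and since `T` is a tree the geodesic between these two points stays
uniformly close to the chain. Choosing an orbit point near each vertex of the geodesic gives a
sequence from `g` to `h` of length `d(A(g,x), A(h,x)) + 1` whose consecutive quotients move `x`
by at most `R₀`, so `d_S(g,h) ≤ d(A(g,x), A(h,x)) + 1`.
-/

/-- Word metric associated to a subset `S` of a group `G`: `wordDist S g h` is the least
`k` such that `g⁻¹ * h` is a product of `k` elements of `S ∪ S⁻¹`. -/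
noncomputable def wordDist {G : Type} [Group G] (S : Set G) (g h : G) : ℕ :=
  sInf {k : ℕ | ∃ l : List G, l.length = k ∧ (∀ x ∈ l, x ∈ S ∨ x⁻¹ ∈ S) ∧ g⁻¹ * h = l.prod}

namespace SimpleGraph

variable {V : Type*} {T : SimpleGraph V}

lemma Connected.cast_dist_triangle (hT : T.Connected) (u v w : V) :
    (T.dist u w : ℝ) ≤ T.dist u v + T.dist v w := by
  exact_mod_cast hT.dist_triangle

lemma Walk.dist_le_length_of_mem_support [DecidableEq V] {u v w : V} (p : T.Walk u v)
    (hw : w ∈ p.support) :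
    T.dist u w ≤ p.length :=
  (dist_le (p.takeUntil w hw)).trans (p.length_takeUntil_le_length hw)

lemma Walk.dist_getVert_succ_le {u v : V} (p : T.Walk u v) (i : ℕ) :
    T.dist (p.getVert i) (p.getVert (i + 1)) ≤ 1 := by
  rcases lt_or_ge i p.length with hi | hi
  · exact (dist_eq_one_iff_adj.mpr (p.adj_getVert_succ hi)).le
  · simp [p.getVert_of_length_le hi, p.getVert_of_length_le (hi.trans i.le_succ)]

lemma IsAcyclic.support_subset_of_isPath (hT : T.IsAcyclic) {u v : V} {p : T.Walk u v}
    (hp : p.IsPath) (q : T.Walk u v) : p.support ⊆ q.support := by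
  classical
  have hpq : p = q.bypass :=
    congrArg Subtype.val ((hT.subsingleton_path u v).elim ⟨p, hp⟩ ⟨q.bypass, q.bypass_isPath⟩)
  exact hpq ▸ q.support_bypass_subset_support

lemma Connected.exists_walk_near_chain (hT : T.Connected) (y : ℕ → V) (m : ℕ) :
    ∃ w : T.Walk (y 0) (y m),
      ∀ v ∈ w.support, ∃ j, T.dist (y j) v ≤ T.dist (y j) (y (j + 1)) := by
  classical
  induction m with
  | zero => exact ⟨.nil, fun v hv => ⟨0, by simp_all⟩⟩
  | succ m ih =>
    obtain ⟨w, hw⟩ := ih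
    obtain ⟨q, hq⟩ := hT.exists_walk_length_eq_dist (y m) (y (m + 1))
    refine ⟨w.append q, fun v hv => ?_⟩
    rcases (Walk.mem_support_append_iff w q).mp hv with hv | hv
    · exact hw v hv
    · exact ⟨m, hq ▸ q.dist_le_length_of_mem_support hv⟩

lemma IsTree.exists_dist_le_of_mem_support (hT : T.IsTree) (y : ℕ → V) (m : ℕ) {u v : V}
    {p : T.Walk u v} (hp : p.IsPath) (hu : y 0 = u) (hv : y m = v) {z : V} (hz : z ∈ p.support) :
    ∃ j, T.dist (y j) z ≤ T.dist (y j) (y (j + 1)) := by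
  subst hu hv
  obtain ⟨w, hw⟩ := hT.connected.exists_walk_near_chain y m
  exact hw z (hT.isAcyclic.support_subset_of_isPath hp w hz)

lemma Connected.exists_chain_near_walk {α : Type*} (hT : T.Connected) (f : α → V) (g h : α)
    {D : ℝ} (hD : 0 ≤ D) (p : T.Walk (f g) (f h))
    (hnear : ∀ v ∈ p.support, ∃ k, (T.dist (f k) v : ℝ) ≤ D) :
    ∃ c : ℕ → α, c 0 = g ∧ c (p.length + 1) = h ∧
      ∀ a, (T.dist (f (c a)) (f (c (a + 1))) : ℝ) ≤ 2 * D + 1 := by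
  classical
  choose e he using fun a => hnear _ (p.getVert_mem_support a)
  let c : ℕ → α := fun a => if a = 0 then g else if p.length < a then h else e a
  have hc : ∀ a, (T.dist (f (c a)) (p.getVert a) : ℝ) ≤ D := by
    intro a
    by_cases ha0 : a = 0
    · simp [c, ha0, hD]
    by_cases ha : p.length < a
    · simp [c, ha0, ha, p.getVert_of_length_le ha.le, hD]
    · simpa [c, ha0, ha] using he a
  refine ⟨c, by simp [c], by simp [c], fun a => ?_⟩
  have hstep : (T.dist (p.getVert a) (p.getVert (a + 1)) : ℝ) ≤ 1 := by
    exact_mod_cast p.dist_getVert_succ_le a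
  have h₁ := hT.cast_dist_triangle (f (c a)) (p.getVert a) (f (c (a + 1)))
  have h₂ := hT.cast_dist_triangle (p.getVert a) (p.getVert (a + 1)) (f (c (a + 1)))
  have h₃ := hc (a + 1)
  rw [SimpleGraph.dist_comm] at h₃
  linarith [hc a]

end SimpleGraph

section WordMetric

variable {G : Type} [Group G] {S : Set G}

lemma exists_list_prod_eq_of_closure_eq_top (hS : Subgroup.closure S = ⊤) (z : G) :
    ∃ l : List G, (∀ y ∈ l, y ∈ S ∨ y⁻¹ ∈ S) ∧ l.prod = z := by
  have hz : z ∈ (Subgroup.closure S).toSubmonoid := hS ▸ Subgroup.mem_top z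
  rw [Subgroup.closure_toSubmonoid] at hz
  obtain ⟨l, hl, rfl⟩ := Submonoid.exists_list_of_mem_closure hz
  exact ⟨l, fun y hy => (hl y hy).imp id Set.mem_inv.mp, rfl⟩

lemma exists_list_length_eq_wordDist (hS : Subgroup.closure S = ⊤) (g h : G) :
    ∃ l : List G, l.length = wordDist S g h ∧ (∀ y ∈ l, y ∈ S ∨ y⁻¹ ∈ S) ∧
      g⁻¹ * h = l.prod := by
  obtain ⟨l, hl, hprod⟩ := exists_list_prod_eq_of_closure_eq_top hS (g⁻¹ * h)
  exact Nat.sInf_mem (s := {k | ∃ l : List G, l.length = k ∧ (∀ y ∈ l, y ∈ S ∨ y⁻¹ ∈ S) ∧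
    g⁻¹ * h = l.prod}) ⟨l.length, l, rfl, hl, hprod.symm⟩

lemma List.prod_map_range_inv_mul (c : ℕ → G) (n : ℕ) :
    ((List.range n).map fun a => (c a)⁻¹ * c (a + 1)).prod = (c 0)⁻¹ * c n := by
  induction n with
  | zero => simp
  | succ n ih => simp [List.range_succ, ih, mul_assoc]

lemma wordDist_le_of_chain (c : ℕ → G) (n : ℕ) (hc : ∀ a < n, (c a)⁻¹ * c (a + 1) ∈ S) :
    wordDist S (c 0) (c n) ≤ n := by
  refine Nat.sInf_le ⟨(List.range n).map fun a => (c a)⁻¹ * c (a + 1), by simp, ?_,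
    (List.prod_map_range_inv_mul c n).symm⟩
  simp only [List.mem_map, List.mem_range]
  rintro _ ⟨a, ha, rfl⟩
  exact Or.inl (hc a ha)

end WordMetric

section OrbitMap

variable {G : Type} [Group G] {V : Type} {T : SimpleGraph V} {S : Set G}

lemma dist_mul_le_of_mem_or_inv_mem (f : G → V) {L : ℝ}
    (hf : ∀ g, ∀ s ∈ S, (T.dist (f g) (f (g * s)) : ℝ) ≤ L) (g : G) {s : G}
    (hs : s ∈ S ∨ s⁻¹ ∈ S) : (T.dist (f g) (f (g * s)) : ℝ) ≤ L := by
  rcases hs with hs | hs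
  · exact hf g s hs
  · simpa [SimpleGraph.dist_comm] using hf (g * s) s⁻¹ hs

lemma dist_mul_list_prod_le (hT : T.Connected) (f : G → V) {L : ℝ}
    (hf : ∀ g, ∀ s ∈ S, (T.dist (f g) (f (g * s)) : ℝ) ≤ L) (l : List G)
    (hl : ∀ y ∈ l, y ∈ S ∨ y⁻¹ ∈ S) (g : G) :
    (T.dist (f g) (f (g * l.prod)) : ℝ) ≤ L * l.length := by
  induction l generalizing g with
  | nil => simp
  | cons s l ih =>
    have hs := dist_mul_le_of_mem_or_inv_mem f hf g (hl s List.mem_cons_self)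
    have hrest := ih (fun y hy => hl y (List.mem_cons_of_mem s hy)) (g * s)
    have htri := hT.cast_dist_triangle (f g) (f (g * s)) (f (g * s * l.prod))
    rw [List.prod_cons, ← mul_assoc, List.length_cons, Nat.cast_succ]
    linarith

lemma dist_le_mul_wordDist (hT : T.Connected) (hS : Subgroup.closure S = ⊤) (f : G → V) {L : ℝ}
    (hf : ∀ g, ∀ s ∈ S, (T.dist (f g) (f (g * s)) : ℝ) ≤ L) (g h : G) :
    (T.dist (f g) (f h) : ℝ) ≤ L * wordDist S g h := by
  obtain ⟨l, hlen, hl, hprod⟩ := exists_list_length_eq_wordDist hS g h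
  have := dist_mul_list_prod_le hT f hf l hl g
  rwa [← hprod, mul_inv_cancel_left, hlen] at this

lemma wordDist_le_dist_add_one (hT : T.IsTree) (f : G → V) {S₀ : Set G}
    (hS₀ : Subgroup.closure S₀ = ⊤) {D : ℝ} (hD0 : 0 ≤ D)
    (hD : ∀ g, ∀ s ∈ S₀, (T.dist (f g) (f (g * s)) : ℝ) ≤ D)
    (hS : ∀ g h, (T.dist (f g) (f h) : ℝ) ≤ 2 * D + 1 → g⁻¹ * h ∈ S) (g h : G) :
    wordDist S g h ≤ T.dist (f g) (f h) + 1 := by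
  obtain ⟨l, hl, hprod⟩ := exists_list_prod_eq_of_closure_eq_top hS₀ (g⁻¹ * h)
  let y : ℕ → V := fun j => f (g * (l.take j).prod)
  have hy : ∀ j, (T.dist (y j) (y (j + 1)) : ℝ) ≤ D := by
    intro j
    rcases lt_or_ge j l.length with hj | hj
    · simp only [y, List.prod_take_succ l j hj, ← mul_assoc]
      exact dist_mul_le_of_mem_or_inv_mem f hD _ (hl _ (List.getElem_mem hj))
    · simp [y, List.take_of_length_le hj, List.take_of_length_le (hj.trans j.le_succ), hD0]
  obtain ⟨p, hp, hlen⟩ := hT.connected.exists_path_of_dist (f g) (f h)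
  have hnear : ∀ v ∈ p.support, ∃ k, (T.dist (f k) v : ℝ) ≤ D := by
    intro v hv
    obtain ⟨j, hj⟩ := hT.exists_dist_le_of_mem_support y l.length hp (by simp [y])
      (by simp [y, hprod]) hv
    exact ⟨_, (Nat.cast_le.mpr hj).trans (hy j)⟩
  obtain ⟨c, hc0, hcn, hc⟩ := hT.connected.exists_chain_near_walk f g h hD0 p hnear
  calc wordDist S g h = wordDist S (c 0) (c (p.length + 1)) := by rw [hc0, hcn]
    _ ≤ p.length + 1 := wordDist_le_of_chain c _ fun a _ => by simpa using hS _ _ (hc a)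
    _ = T.dist (f g) (f h) + 1 := by rw [hlen]

end OrbitMap

lemma exists_qie_constants_of_le_add_one {α : Type*} {d₁ d₂ : α → α → ℝ} {L : ℝ} (hL : 0 ≤ L)
    (hd₁ : ∀ a b, 0 ≤ d₁ a b) (hup : ∀ a b, d₂ a b ≤ L * d₁ a b)
    (hlow : ∀ a b, d₁ a b ≤ d₂ a b + 1) :
    ∃ K' C' : ℝ, 1 ≤ K' ∧ 0 ≤ C' ∧
      ∀ a b, d₁ a b / K' - C' ≤ d₂ a b ∧ d₂ a b ≤ K' * d₁ a b + C' := by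
  refine ⟨L + 1, 1, by linarith, zero_le_one, fun a b => ⟨?_, ?_⟩⟩
  · linarith [div_le_self (hd₁ a b) (by linarith : (1 : ℝ) ≤ L + 1), hlow a b]
  · nlinarith [hup a b, hd₁ a b]

section QuasiAction

variable {G : Type} [Group G] {V : Type} {T : SimpleGraph V} {K C : ℝ} {A : G → V → V}

lemma dist_act_one_le (hK : 0 < K)
    (hcoarse : ∀ u v, (T.dist u v : ℝ) / K - C ≤ T.dist (A 1 u) (A 1 v))
    (hcoc : ∀ g h : G, ∀ u, (T.dist (A g (A h u)) (A (g * h) u) : ℝ) ≤ C) (x : V) :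
    (T.dist (A 1 x) x : ℝ) ≤ 2 * K * C := by
  have h₁ := hcoc 1 1 x
  rw [one_mul] at h₁
  have h₂ : (T.dist (A 1 x) x : ℝ) / K ≤ 2 * C := by linarith [hcoarse (A 1 x) x]
  rw [div_le_iff₀ hK] at h₂
  linarith

lemma dist_act_mul_le (hT : T.Connected)
    (hLip : ∀ g u v, (T.dist (A g u) (A g v) : ℝ) ≤ K * T.dist u v + C)
    (hcoc : ∀ g h : G, ∀ u, (T.dist (A g (A h u)) (A (g * h) u) : ℝ) ≤ C) (g s : G) (x : V) :
    (T.dist (A g x) (A (g * s) x) : ℝ) ≤ K * T.dist (A s x) x + 2 * C := by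
  have h₁ := hT.cast_dist_triangle (A g x) (A g (A s x)) (A (g * s) x)
  have h₂ := hLip g x (A s x)
  rw [SimpleGraph.dist_comm (u := x)] at h₂
  linarith [hcoc g s x]

lemma dist_act_inv_mul_le (hT : T.Connected)
    (hLip : ∀ g u v, (T.dist (A g u) (A g v) : ℝ) ≤ K * T.dist u v + C)
    (hcoc : ∀ g h : G, ∀ u, (T.dist (A g (A h u)) (A (g * h) u) : ℝ) ≤ C) (g h : G) (x : V) :
    (T.dist (A (g⁻¹ * h) x) x : ℝ) ≤
      K * T.dist (A g x) (A h x) + 3 * C + T.dist (A 1 x) x := by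
  have h₁ := hT.cast_dist_triangle (A (g⁻¹ * h) x) (A g⁻¹ (A h x)) x
  have h₂ := hT.cast_dist_triangle (A g⁻¹ (A h x)) (A g⁻¹ (A g x)) x
  have h₃ := hT.cast_dist_triangle (A g⁻¹ (A g x)) (A 1 x) x
  have h₄ := hcoc g⁻¹ h x
  have h₅ := hcoc g⁻¹ g x
  have h₆ := hLip g⁻¹ (A h x) (A g x)
  rw [SimpleGraph.dist_comm] at h₄
  rw [inv_mul_cancel] at h₅
  rw [SimpleGraph.dist_comm (u := A h x)] at h₆
  linarith

end QuasiAction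

theorem stmt_4 (G : Type) [Group G] (hFG : Group.FG G)
    (V : Type) (T : SimpleGraph V) (hT : T.IsTree)
    (K C : ℝ) (hK : 1 ≤ K) (hC : 0 ≤ C)
    (A : G → V → V)
    -- each A(g,−) is a (K,C)-quasi-isometry of the tree
    (hQI : ∀ g : G,
      (∀ u v : V, (T.dist u v : ℝ) / K - C ≤ (T.dist (A g u) (A g v) : ℝ) ∧
        (T.dist (A g u) (A g v) : ℝ) ≤ K * (T.dist u v : ℝ) + C) ∧
      ∀ v : V, ∃ u : V, (T.dist v (A g u) : ℝ) ≤ C)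
    -- quasi-action cocycle condition
    (hcoc : ∀ g h : G, ∀ u : V, (T.dist (A g (A h u)) (A (g * h) u) : ℝ) ≤ C)
    (x : V) :
    ∃ R₀ : ℝ, ∀ R : ℝ, R₀ ≤ R →
      (Subgroup.closure {s : G | (T.dist (A s x) x : ℝ) ≤ R} = ⊤) ∧
      ∃ K' C' : ℝ, 1 ≤ K' ∧ 0 ≤ C' ∧
        ∀ g h : G,
          (wordDist {s : G | (T.dist (A s x) x : ℝ) ≤ R} g h : ℝ) / K' - C'
              ≤ (T.dist (A g x) (A h x) : ℝ) ∧
          (T.dist (A g x) (A h x) : ℝ)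
              ≤ K' * (wordDist {s : G | (T.dist (A s x) x : ℝ) ≤ R} g h : ℝ) + C' := by
  have hLip : ∀ g u v, (T.dist (A g u) (A g v) : ℝ) ≤ K * T.dist u v + C :=
    fun g u v => ((hQI g).1 u v).2
  have hone := dist_act_one_le (by linarith) (fun u v => ((hQI 1).1 u v).1) hcoc x
  obtain ⟨S₀, hS₀, hS₀fin⟩ := Group.fg_iff.mp hFG
  obtain ⟨M, hM0, hMS₀⟩ : ∃ M : ℝ, 0 ≤ M ∧ ∀ s ∈ S₀, (T.dist (A s x) x : ℝ) ≤ M := by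
    obtain ⟨M, hM⟩ := (hS₀fin.image fun s => (T.dist (A s x) x : ℝ)).bddAbove
    exact ⟨max M 0, le_max_right M 0,
      fun s hs => (hM (Set.mem_image_of_mem _ hs)).trans (le_max_left M 0)⟩
  -- With `D = K * M + 2 * C` bounding the steps along words in `S₀`, `R₀` bounds how far
  -- `g⁻¹ * h` moves `x` once `A(g,x)` and `A(h,x)` are `2 * D + 1`-close.
  refine ⟨K * (2 * (K * M + 2 * C) + 1) + 3 * C + 2 * K * C, fun R hR => ?_⟩
  set S := {s : G | (T.dist (A s x) x : ℝ) ≤ R}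
  have hK0 : 0 ≤ K := zero_le_one.trans hK
  have hMR : M ≤ R := by
    nlinarith [le_mul_of_one_le_left hM0 hK, le_mul_of_one_le_left (mul_nonneg hK0 hM0) hK,
      mul_nonneg hK0 hC]
  have hS : Subgroup.closure S = ⊤ :=
    top_le_iff.mp (hS₀ ▸ Subgroup.closure_mono fun s hs => (hMS₀ s hs).trans hMR)
  have hlower := wordDist_le_dist_add_one (S := S) (D := K * M + 2 * C) hT (fun g => A g x)
    hS₀ (by positivity)
    (fun g s hs => (dist_act_mul_le hT.connected hLip hcoc g s x).trans
      (by gcongr; exact hMS₀ s hs))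
    (fun g h hgh => by
      have := dist_act_inv_mul_le hT.connected hLip hcoc g h x
      show _ ≤ R
      nlinarith)
  have hupper := dist_le_mul_wordDist (L := K * R + 2 * C) hT.connected hS (fun g => A g x)
    (fun g s hs => (dist_act_mul_le hT.connected hLip hcoc g s x).trans
      (by gcongr; exact hs))
  exact ⟨hS, exists_qie_constants_of_le_add_one (by nlinarith) (fun _ _ => Nat.cast_nonneg _)
    hupper fun g h => by exact_mod_cast hlower g h⟩
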